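/- Let w1, w2, w3 ∈ ℝ with w3 ∉ {0,1} and such that ŵ3 := w1·w3 + w2·(1-w3) ∉ {0,1}. Define ŵ1 := w1·w3 / ŵ3 and ŵ2 := w3·(1-w1) / (1 - ŵ3). Then these satisfy w1·w3 = ŵ1·ŵ3, w2·(1-w3) = ŵ3·(1-ŵ1), w3·(1-w1) = ŵ2·(1-ŵ3), and (1-w2)·(1-w3) = (1-ŵ2)·(1-ŵ3). -/

import Mathlib

theorem weight_correspondence_converse_general (w1 w2 w3 : ℝ)
    (hh0 : w1 * w3 + w2 * (1 - w3) ≠ 0)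
    (hh1 : w1 * w3 + w2 * (1 - w3) ≠ 1) :
    let v3 := w1 * w3 + w2 * (1 - w3)
    let v1 := w1 * w3 / v3
    let v2 := w3 * (1 - w1) / (1 - v3)
    w1 * w3 = v1 * v3 ∧
    w2 * (1 - w3) = v3 * (1 - v1) ∧
    w3 * (1 - w1) = v2 * (1 - v3) ∧
    (1 - w2) * (1 - w3) = (1 - v2) * (1 - v3) := by
  intro v3 v1 v2
  have hv1 : v1 * v3 = w1 * w3 := div_mul_cancel₀ _ hh0
  have hv2 : v2 * (1 - v3) = w3 * (1 - w1) := div_mul_cancel₀ _ (sub_ne_zero.mpr hh1.symm)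
  refine ⟨hv1.symm, ?_, hv2.symm, ?_⟩
  · linear_combination hv1
  · linear_combination hv2

theorem weight_correspondence_converse (w1 w2 w3 : ℝ)
    (h0 : w3 ≠ 0) (h1 : w3 ≠ 1)
    (hh0 : w1 * w3 + w2 * (1 - w3) ≠ 0)
    (hh1 : w1 * w3 + w2 * (1 - w3) ≠ 1) :
    let v3 := w1 * w3 + w2 * (1 - w3)
    let v1 := w1 * w3 / v3
    let v2 := w3 * (1 - w1) / (1 - v3)
    w1 * w3 = v1 * v3 ∧
    w2 * (1 - w3) = v3 * (1 - v1) ∧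
    w3 * (1 - w1) = v2 * (1 - v3) ∧
    (1 - w2) * (1 - w3) = (1 - v2) * (1 - v3) :=
  weight_correspondence_converse_general w1 w2 w3 hh0 hh1
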